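/- For fixed w > 0, the two-sided coverage probability g(φ, w) = (φ/π)·F₂(w²) + (2/π)·∫_{φ/2}^{π/2} F₂(w²/cos²(θ - φ/2)) dθ is strictly decreasing in φ on (0, π). Consequently, the critical value w solving g(φ, w) = 1 - α is strictly increasing in φ: narrower intervals (smaller cone angle φ) yield smaller critical values and narrower bands. -/
import Mathlib

open Set Real

noncomputable def chi2cdf (t : ℝ) : ℝ := 1 - Real.exp (-(t / 2))

noncomputable def twoSidedCoverage (φ w : ℝ) : ℝ :=
  (φ / π) * chi2cdf (w ^ 2) +
    (2 / π) * ∫ θ in (φ / 2)..(π / 2), chi2cdf (w ^ 2 / Real.cos (θ - φ / 2) ^ 2)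

lemma chi2cdf_lt_chi2cdf {s t : ℝ} (h : s < t) : chi2cdf s < chi2cdf t := by
  unfold chi2cdf
  have := Real.exp_lt_exp.mpr (show -(t/2) < -(s/2) by linarith)
  linarith

lemma chi2cdf_le_chi2cdf {s t : ℝ} (h : s ≤ t) : chi2cdf s ≤ chi2cdf t := by
  rcases eq_or_lt_of_le h with rfl | h
  · exact le_refl _
  · exact (chi2cdf_lt_chi2cdf h).le

lemma continuous_chi2cdf : Continuous chi2cdf := by
  unfold chi2cdf; fun_prop

lemma contOn_h (w : ℝ) {s : Set ℝ} (hs : ∀ ψ ∈ s, Real.cos ψ ≠ 0) :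
    ContinuousOn (fun ψ => chi2cdf (w ^ 2 / Real.cos ψ ^ 2)) s := by
  apply continuous_chi2cdf.comp_continuousOn
  exact ContinuousOn.div continuousOn_const
    ((Real.continuous_cos.continuousOn).pow 2)
    (fun ψ hψ => pow_ne_zero 2 (hs ψ hψ))

lemma coverage_eq (φ w : ℝ) :
    twoSidedCoverage φ w = (φ / π) * chi2cdf (w ^ 2) +
      (2 / π) * ∫ ψ in (0:ℝ)..(π/2 - φ/2), chi2cdf (w ^ 2 / Real.cos ψ ^ 2) := by
  unfold twoSidedCoverage
  have : (∫ θ in (φ/2)..(π/2), chi2cdf (w ^ 2 / Real.cos (θ - φ/2) ^ 2))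
      = ∫ ψ in (φ/2 - φ/2)..(π/2 - φ/2), chi2cdf (w ^ 2 / Real.cos ψ ^ 2) :=
    intervalIntegral.integral_comp_sub_right (fun ψ => chi2cdf (w ^ 2 / Real.cos ψ ^ 2)) (φ/2)
  rw [this]
  norm_num

lemma coverage_mono_w {φ : ℝ} (hφ : φ ∈ Set.Ioo (0:ℝ) π) {w₁ w₂ : ℝ}
    (h1 : 0 < w₁) (h12 : w₁ ≤ w₂) :
    twoSidedCoverage φ w₁ ≤ twoSidedCoverage φ w₂ := by
  obtain ⟨hφ0, hφπ⟩ := hφ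
  have hπ : (0:ℝ) < π := Real.pi_pos
  rw [coverage_eq, coverage_eq]
  have hB : (0:ℝ) ≤ π/2 - φ/2 := by linarith
  have hcos : ∀ ψ ∈ Set.Icc (0:ℝ) (π/2 - φ/2), 0 < Real.cos ψ := by
    intro ψ hψ
    exact Real.cos_pos_of_mem_Ioo ⟨by linarith [hψ.1], by linarith [hψ.2]⟩
  have hint : ∀ w' : ℝ, IntervalIntegrable (fun ψ => chi2cdf (w' ^ 2 / Real.cos ψ ^ 2))
      MeasureTheory.volume 0 (π/2 - φ/2) := by
    intro w'
    apply ContinuousOn.intervalIntegrable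
    rw [Set.uIcc_of_le hB]
    exact contOn_h w' (fun ψ hψ => (hcos ψ hψ).ne')
  have t1 : (φ / π) * chi2cdf (w₁ ^ 2) ≤ (φ / π) * chi2cdf (w₂ ^ 2) :=
    mul_le_mul_of_nonneg_left (chi2cdf_le_chi2cdf (by nlinarith)) (by positivity)
  have t2 : (∫ ψ in (0:ℝ)..(π/2 - φ/2), chi2cdf (w₁ ^ 2 / Real.cos ψ ^ 2))
      ≤ ∫ ψ in (0:ℝ)..(π/2 - φ/2), chi2cdf (w₂ ^ 2 / Real.cos ψ ^ 2) := by
    apply intervalIntegral.integral_mono_on hB (hint w₁) (hint w₂)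
    intro ψ hψ
    apply chi2cdf_le_chi2cdf
    have hc := hcos ψ hψ
    gcongr
  have := mul_le_mul_of_nonneg_left t2 (show (0:ℝ) ≤ 2/π by positivity)
  linarith

lemma coverage_strictAnti (w : ℝ) (hw : 0 < w) :
    StrictAntiOn (fun φ => twoSidedCoverage φ w) (Set.Ioo 0 π) := by
  intro a ha b hb hab
  obtain ⟨ha0, haπ⟩ := ha
  obtain ⟨hb0, hbπ⟩ := hb
  have hπ : (0:ℝ) < π := Real.pi_pos
  simp only
  rw [coverage_eq, coverage_eq]
  have hA0 : 0 < π/2 - b/2 := by linarith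
  have hAB : π/2 - b/2 < π/2 - a/2 := by linarith
  have hBlt : π/2 - a/2 < π/2 := by linarith
  have hcos : ∀ ψ ∈ Set.Icc (0:ℝ) (π/2 - a/2), 0 < Real.cos ψ := by
    intro ψ hψ
    exact Real.cos_pos_of_mem_Ioo ⟨by linarith [hψ.1], by linarith [hψ.2]⟩
  have hint : ∀ p q : ℝ, 0 ≤ p → p ≤ q → q ≤ π/2 - a/2 →
      IntervalIntegrable (fun ψ => chi2cdf (w ^ 2 / Real.cos ψ ^ 2))
      MeasureTheory.volume p q := by
    intro p q hp hpq hq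
    apply ContinuousOn.intervalIntegrable
    rw [Set.uIcc_of_le hpq]
    exact contOn_h w (fun ψ hψ => (hcos ψ ⟨by linarith [hψ.1], by linarith [hψ.2]⟩).ne')
  have hsplit : (∫ ψ in (0:ℝ)..(π/2 - a/2), chi2cdf (w ^ 2 / Real.cos ψ ^ 2))
      = (∫ ψ in (0:ℝ)..(π/2 - b/2), chi2cdf (w ^ 2 / Real.cos ψ ^ 2))
        + ∫ ψ in (π/2 - b/2)..(π/2 - a/2), chi2cdf (w ^ 2 / Real.cos ψ ^ 2) :=
    (intervalIntegral.integral_add_adjacent_intervals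
      (hint 0 (π/2 - b/2) le_rfl hA0.le (by linarith))
      (hint (π/2 - b/2) (π/2 - a/2) hA0.le hAB.le le_rfl)).symm
  have hcApos : 0 < Real.cos (π/2 - b/2) := hcos _ ⟨hA0.le, hAB.le⟩
  have hcA : Real.cos (π/2 - b/2) < 1 := by
    have := Real.strictAntiOn_cos (Set.mem_Icc.mpr ⟨le_rfl, hπ.le⟩)
      (Set.mem_Icc.mpr ⟨hA0.le, by linarith⟩) hA0
    rwa [Real.cos_zero] at this
  have hc2 : Real.cos (π/2 - b/2) ^ 2 < 1 := by nlinarith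
  have hkey : chi2cdf (w ^ 2) < chi2cdf (w ^ 2 / Real.cos (π/2 - b/2) ^ 2) := by
    apply chi2cdf_lt_chi2cdf
    rw [lt_div_iff₀ (by positivity)]
    nlinarith [mul_pos hw hw]
  have hlb : ((π/2 - a/2) - (π/2 - b/2)) * chi2cdf (w ^ 2 / Real.cos (π/2 - b/2) ^ 2)
      ≤ ∫ ψ in (π/2 - b/2)..(π/2 - a/2), chi2cdf (w ^ 2 / Real.cos ψ ^ 2) := by
    have := intervalIntegral.integral_mono_on hAB.le
      (intervalIntegrable_const (c := chi2cdf (w ^ 2 / Real.cos (π/2 - b/2) ^ 2)))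
      (hint (π/2 - b/2) (π/2 - a/2) hA0.le hAB.le le_rfl)
      (fun ψ hψ => by
        apply chi2cdf_le_chi2cdf
        have h1 : Real.cos ψ ≤ Real.cos (π/2 - b/2) :=
          Real.cos_le_cos_of_nonneg_of_le_pi hA0.le (by linarith [hψ.2]) hψ.1
        have h2 : 0 < Real.cos ψ := hcos ψ ⟨by linarith [hψ.1], hψ.2⟩
        gcongr)
    simpa using this
  have hfinal : ((b - a)/π) * chi2cdf (w ^ 2)
      < (2/π) * ∫ ψ in (π/2 - b/2)..(π/2 - a/2), chi2cdf (w ^ 2 / Real.cos ψ ^ 2) := by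
    calc ((b - a)/π) * chi2cdf (w ^ 2)
        = (2/π) * (((π/2 - a/2) - (π/2 - b/2)) * chi2cdf (w ^ 2)) := by ring
      _ < (2/π) * (((π/2 - a/2) - (π/2 - b/2)) * chi2cdf (w ^ 2 / Real.cos (π/2 - b/2) ^ 2)) := by
          apply mul_lt_mul_of_pos_left _ (by positivity)
          exact mul_lt_mul_of_pos_left hkey (by linarith)
      _ ≤ (2/π) * ∫ ψ in (π/2 - b/2)..(π/2 - a/2), chi2cdf (w ^ 2 / Real.cos ψ ^ 2) :=
          mul_le_mul_of_nonneg_left hlb (by positivity)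
  rw [hsplit]
  have hrw : (b / π) * chi2cdf (w ^ 2) - (a / π) * chi2cdf (w ^ 2)
      = ((b - a)/π) * chi2cdf (w ^ 2) := by ring
  nlinarith [hfinal, hrw]

/-- For fixed `w > 0`, the two-sided coverage probability
`g(φ, w) = (φ/π)·F₂(w²) + (2/π)·∫_{φ/2}^{π/2} F₂(w²/cos²(θ - φ/2)) dθ` is strictly decreasing
in `φ` on `(0, π)`. Consequently, the critical value `w` solving `g(φ, w) = 1 - α` is strictly
increasing in `φ`: narrower intervals (smaller cone angle `φ`) yield smaller critical values
and narrower bands. -/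
theorem two_sided_coverage_strictAnti_in_angle (w : ℝ) (hw : 0 < w) :
    StrictAntiOn (fun φ => twoSidedCoverage φ w) (Set.Ioo 0 π) ∧
    ∀ α φ₁ φ₂ w₁ w₂ : ℝ, φ₁ ∈ Set.Ioo (0 : ℝ) π → φ₂ ∈ Set.Ioo (0 : ℝ) π → φ₁ < φ₂ →
      0 < w₁ → 0 < w₂ →
      twoSidedCoverage φ₁ w₁ = 1 - α → twoSidedCoverage φ₂ w₂ = 1 - α → w₁ < w₂ := by
  refine ⟨coverage_strictAnti w hw, ?_⟩
  intro α φ₁ φ₂ w₁ w₂ h1 h2 h12 hw1 hw2 he1 he2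
  by_contra hle
  push_neg at hle
  have hA := coverage_strictAnti w₁ hw1 h1 h2 h12
  have hB := coverage_mono_w h2 hw2 hle
  simp only at hA
  linarith [he1 ▸ hA, he2 ▸ hB]
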